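/- arXiv:math/0306021 — 8 statements merged into one kernel-verified Lean document; each statement's English description precedes it below -/
import Mathlib

section
/- The set of real numbers of the form μ₁² + μ₂² + ... + μₛ², where s ranges over positive integers and μ₁,...,μₛ are rational numbers satisfying μ₁ + ... + μₛ = 1, is dense in the closed unit interval [0,1]. -/
/-- The set of real numbers of the form `μ₁² + ⋯ + μₛ²`, where `s ≥ 1` and
`μ₁, …, μₛ` are rationals summing to `1`, is dense in `[0,1]`. -/
theorem sum_sq_rat_dense_unitInterval :
    Set.Icc (0 : ℝ) 1 ⊆
      closure {x : ℝ | ∃ s : ℕ, 1 ≤ s ∧ ∃ μ : Fin s → ℚ,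
        (∑ j, μ j) = 1 ∧ x = ∑ j, ((μ j : ℝ))^2} := by
  intro t ht
  rw [Metric.mem_closure_iff]
  intro ε hε
  obtain ⟨ht0, ht1⟩ := ht
  set r := Real.sqrt t with hr
  have hr0 : 0 ≤ r := Real.sqrt_nonneg t
  have hr1 : r ≤ 1 := by
    rw [hr, show (1:ℝ) = Real.sqrt 1 by simp]
    exact Real.sqrt_le_sqrt ht1
  have hrsq : r ^ 2 = t := Real.sq_sqrt ht0
  set δ := min (ε / 7) 1 with hδ
  have hδ0 : 0 < δ := lt_min (by linarith) one_pos
  have hδε : δ ≤ ε / 7 := min_le_left _ _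
  have hδ1 : δ ≤ 1 := min_le_right _ _
  obtain ⟨q, hq1, hq2⟩ := exists_rat_btwn (lt_add_of_pos_right r hδ0)
  -- the near-square estimate
  have hq0 : (0:ℝ) ≤ q := le_of_lt (lt_of_le_of_lt hr0 hq1)
  have hsq : |(q:ℝ) ^ 2 - t| < ε / 2 := by
    have h1 : (q:ℝ) ^ 2 - t = ((q:ℝ) - r) * ((q:ℝ) + r) := by
      rw [← hrsq]; ring
    have h2 : (q:ℝ) - r < δ := by linarith
    have h3 : (q:ℝ) + r < 3 := by linarith
    have h4 : (0:ℝ) ≤ (q:ℝ) - r := by linarith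
    have h5 : (0:ℝ) ≤ (q:ℝ) + r := by linarith
    rw [h1, abs_of_nonneg (mul_nonneg h4 h5)]
    calc ((q:ℝ) - r) * ((q:ℝ) + r) ≤ δ * 3 := by nlinarith
      _ < ε / 2 := by linarith
  obtain ⟨N, hN⟩ := exists_nat_gt ((1 - (q:ℝ)) ^ 2 / (ε / 2))
  have hNpos : 0 < N := by
    have : (0:ℝ) ≤ (1 - (q:ℝ)) ^ 2 / (ε / 2) := by positivity
    exact_mod_cast Nat.pos_of_ne_zero (by rintro rfl; push_cast at hN; linarith)
  have hNR : (0:ℝ) < (N:ℝ) := by exact_mod_cast hNpos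
  have hNsmall : (1 - (q:ℝ)) ^ 2 / N < ε / 2 := by
    rw [div_lt_iff₀ hNR]
    rw [div_lt_iff₀ (by linarith : (0:ℝ) < ε / 2)] at hN
    linarith
  refine ⟨(q:ℝ) ^ 2 + (1 - (q:ℝ)) ^ 2 / N, ⟨N + 1, by omega,
    Fin.cons q (fun _ => (1 - q) / N), ?_, ?_⟩, ?_⟩
  · rw [Fin.sum_cons, Finset.sum_const, Finset.card_univ, Fintype.card_fin,
      nsmul_eq_mul]
    have hNQ : (N:ℚ) ≠ 0 := by exact_mod_cast hNpos.ne'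
    field_simp
    ring
  · simp only [Fin.sum_univ_succ, Fin.cons_zero, Fin.cons_succ, Finset.sum_const,
      Finset.card_univ, Fintype.card_fin, nsmul_eq_mul]
    push_cast
    field_simp
  · rw [Real.dist_eq]
    have : |t - ((q:ℝ) ^ 2 + (1 - (q:ℝ)) ^ 2 / N)| ≤ |(q:ℝ)^2 - t| + (1 - (q:ℝ)) ^ 2 / N := by
      have h0 : (0:ℝ) ≤ (1 - (q:ℝ)) ^ 2 / N := by positivity
      rw [abs_sub_comm] at *
      calc |((q:ℝ) ^ 2 + (1 - (q:ℝ)) ^ 2 / N) - t|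
          ≤ |(q:ℝ)^2 - t| + |(1 - (q:ℝ)) ^ 2 / N| := by
            have := abs_add_le ((q:ℝ)^2 - t) ((1 - (q:ℝ)) ^ 2 / N)
            convert this using 2; rfl; rfl; ring
        _ = |(q:ℝ)^2 - t| + (1 - (q:ℝ)) ^ 2 / N := by rw [abs_of_nonneg h0]
      
    calc |t - ((q:ℝ) ^ 2 + (1 - (q:ℝ)) ^ 2 / N)| ≤ _ := this
      _ < ε / 2 + ε / 2 := by linarith
      _ = ε := by ring
end

section
/- The set of real numbers of the form μ₁² + ... + μₛ² with s ≥ 1 and μ₁,...,μₛ rational numbers having odd denominators (in lowest terms) and summing to 1, is dense in [0,1]. -/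
open Finset

lemma oddden_div (t : ℚ) (ht : Odd t.den) (n : ℕ) (hn : 0 < n) (hodd : Odd n) :
    Odd (t / (n : ℚ)).den := by
  have h : (t / (n : ℚ)).den ∣ t.den * ((n : ℚ)⁻¹).den := by
    simpa [div_eq_mul_inv] using Rat.mul_den_dvd t ((n : ℚ)⁻¹)
  rw [Rat.inv_natCast_den_of_pos hn] at h
  exact (ht.mul hodd).of_dvd_nat h

lemma oddden_sub_one (t : ℚ) (ht : Odd t.den) : Odd ((1 : ℚ) - t).den := by
  have h : ((1 : ℚ) - t).den ∣ (1 : ℚ).den * (-t).den := by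
    simpa [sub_eq_add_neg] using Rat.add_den_dvd 1 (-t)
  simp only [Rat.den_ofNat, one_mul, Rat.neg_den] at h
  exact ht.of_dvd_nat h

/-- value membership: for odd n > 0 and odd-den rational t, t²/n + (1-t)² is attained. -/
lemma mem_S (n : ℕ) (hn : 0 < n) (hodd : Odd n) (t : ℚ) (ht : Odd t.den) :
    ((t : ℝ)^2 / n + (1 - (t : ℝ))^2) ∈
      {x : ℝ | ∃ s : ℕ, 1 ≤ s ∧ ∃ μ : Fin s → ℚ,
        (∀ j, Odd (μ j).den) ∧ (∑ j, μ j) = 1 ∧ x = ∑ j, ((μ j : ℝ))^2} := by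
  refine ⟨n + 1, by omega, Fin.snoc (fun _ : Fin n => t / n) (1 - t), ?_, ?_, ?_⟩
  · intro j
    refine Fin.lastCases ?_ (fun i => ?_) j
    · simpa using oddden_sub_one t ht
    · simpa using oddden_div t ht n hn hodd
  · rw [Fin.sum_univ_castSucc]
    simp only [Fin.snoc_castSucc, Fin.snoc_last, Finset.sum_const, card_univ,
      Fintype.card_fin, nsmul_eq_mul]
    have hn' : (n : ℚ) ≠ 0 := Nat.cast_ne_zero.mpr hn.ne'
    field_simp
    ring
  · rw [Fin.sum_univ_castSucc]
    simp only [Fin.snoc_castSucc, Fin.snoc_last, Finset.sum_const, card_univ,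
      Fintype.card_fin, nsmul_eq_mul]
    have hn' : (n : ℝ) ≠ 0 := Nat.cast_ne_zero.mpr hn.ne'
    push_cast
    field_simp

/-- odd-denominator rationals are dense -/
lemma dense_oddden (x : ℝ) (δ : ℝ) (hδ : 0 < δ) :
    ∃ t : ℚ, Odd t.den ∧ |(t : ℝ) - x| < δ := by
  obtain ⟨m, hm⟩ := pow_unbounded_of_one_lt (1 / δ) (by norm_num : (1 : ℝ) < 3)
  set k : ℤ := ⌊x * 3 ^ m⌋
  refine ⟨(k : ℚ) / (3 ^ m : ℚ), ?_, ?_⟩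
  · have h : ((k : ℚ) / ((3 ^ m : ℤ) : ℚ)).den ∣ (3 : ℕ) ^ m := by
      have := Rat.den_dvd k (3 ^ m)
      rw [Rat.divInt_eq_div] at this
      exact_mod_cast this
    have hodd3 : Odd ((3 : ℕ) ^ m) := Odd.pow ⟨1, rfl⟩
    refine hodd3.of_dvd_nat ?_
    simpa using h
  · have h3 : (0 : ℝ) < 3 ^ m := by positivity
    have h1 : (k : ℝ) ≤ x * 3 ^ m := Int.floor_le _
    have h2 : x * 3 ^ m < k + 1 := Int.lt_floor_add_one _
    have e1 : (k : ℝ) / 3 ^ m ≤ x := by rw [div_le_iff₀ h3]; exact h1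
    have e2 : x < ((k : ℝ) + 1) / 3 ^ m := by rw [lt_div_iff₀ h3]; linarith
    have e3 : ((k : ℝ) + 1) / 3 ^ m = (k : ℝ) / 3 ^ m + 1 / 3 ^ m := by ring
    have hb : |(k : ℝ) / 3 ^ m - x| ≤ 1 / 3 ^ m := by
      rw [abs_le]; constructor <;> [linarith; linarith]
    have h1δ : (1 / δ) * δ = 1 := by field_simp
    have hlt : (1 : ℝ) / 3 ^ m < δ := by
      rw [div_lt_iff₀ h3]
      nlinarith [mul_lt_mul_of_pos_right hm hδ]
    push_cast
    calc |(k : ℝ) / 3 ^ m - x| ≤ 1 / 3 ^ m := hb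
    _ < δ := hlt

/-- The set of real numbers of the form `μ₁² + ⋯ + μₛ²`, where `s ≥ 1` and
`μ₁, …, μₛ` are rationals with odd denominators (in lowest terms) summing to `1`,
is dense in `[0,1]`. -/
theorem sum_sq_rat_oddDen_dense_unitInterval :
    Set.Icc (0 : ℝ) 1 ⊆
      closure {x : ℝ | ∃ s : ℕ, 1 ≤ s ∧ ∃ μ : Fin s → ℚ,
        (∀ j, Odd (μ j).den) ∧ (∑ j, μ j) = 1 ∧ x = ∑ j, ((μ j : ℝ))^2} := by
  intro x hx
  obtain ⟨hx0, hx1⟩ := hx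
  rw [Metric.mem_closure_iff]
  intro ε hε
  -- choose odd n with 1/n < ε
  obtain ⟨m, hm⟩ := exists_nat_gt (1 / ε)
  set n : ℕ := 2 * m + 1 with hn_def
  have hn : 0 < n := by omega
  have hodd : Odd n := ⟨m, by omega⟩
  have hnR : (0 : ℝ) < n := Nat.cast_pos.mpr hn
  have hmn : (1 / ε : ℝ) < n := lt_of_lt_of_le hm (by exact_mod_cast (by omega : m ≤ n))
  have h1ε : (1 / ε) * ε = 1 := by field_simp
  have hinv : (1 : ℝ) / n < ε := by
    rw [div_lt_iff₀ hnR]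
    nlinarith [mul_lt_mul_of_pos_right hmn hε]
  -- the function f
  set f : ℝ → ℝ := fun u => u ^ 2 / n + (1 - u) ^ 2 with hf
  have hcont : Continuous f := by fun_prop
  by_cases hcase : x < 1 / n
  · -- take t = 1, value 1/n
    refine ⟨f 1, ?_, ?_⟩
    · have := mem_S n hn hodd 1 (by norm_num)
      simpa [hf] using this
    · have : f 1 = 1 / n := by simp [hf]
      rw [this, Real.dist_eq, abs_lt]
      constructor <;> nlinarith
  · push_neg at hcase
    -- IVT: f 1 = 1/n ≤ x ≤ 1 = f 0
    have h01 : (0 : ℝ) ≤ 1 := by norm_num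
    have himg := intermediate_value_Icc' h01 hcont.continuousOn
    have hx_mem : x ∈ Set.Icc (f 1) (f 0) := by
      constructor
      · simpa [hf] using hcase
      · simp [hf]; linarith
    obtain ⟨t₀, ht₀mem, ht₀⟩ := himg hx_mem
    -- continuity at t₀
    have := Metric.continuous_iff.mp hcont t₀ ε hε
    obtain ⟨δ, hδ, hδ'⟩ := this
    obtain ⟨t, htodd, htnear⟩ := dense_oddden t₀ δ hδ
    refine ⟨f t, ?_, ?_⟩
    · have := mem_S n hn hodd t htodd
      simpa [hf] using this
    · have hd : dist ((t : ℝ)) t₀ < δ := by rwa [Real.dist_eq]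
      have h2 := hδ' (t : ℝ) hd
      rw [← ht₀]
      rwa [dist_comm] at h2
end

section
/- For every real number α > 1 and every natural number k, there exist k odd primes p₁ < p₂ < ... < p_k such that p_k < α · p₁. -/
private lemma summable_aux (α : ℝ) (hα : 1 < α) (D : ℕ) (hD : 0 < D)
    (H : ∀ n : ℕ, α * (Nat.nth Nat.Prime (n + 1) : ℝ) ≤ (Nat.nth Nat.Prime (n + 1 + D) : ℝ)) :
    Summable (fun n : ℕ => 1 / (Nat.nth Nat.Prime n : ℝ)) := by
  have hα0 : (0:ℝ) < α := by linarith
  set q := Nat.nth Nat.Prime with hq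
  have hmono : StrictMono q := Nat.nth_strictMono Nat.infinite_setOf_prime
  have hpos : ∀ n, (0:ℝ) < (q n : ℝ) := fun n => by
    exact_mod_cast (Nat.prime_nth_prime n).pos
  have step1 : ∀ m : ℕ, α ^ m ≤ (q (1 + m * D) : ℝ) := by
    intro m
    induction m with
    | zero =>
      simp only [pow_zero, Nat.zero_mul, Nat.add_zero]
      exact_mod_cast (Nat.prime_nth_prime 1).one_lt.le
    | succ m ih =>
      have h2 := H (m * D)
      have he : 1 + (m + 1) * D = m * D + 1 + D := by ring
      rw [he, pow_succ]
      calc α ^ m * α ≤ (q (1 + m * D) : ℝ) * α := by nlinarith [hpos (1 + m * D)]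
        _ = α * (q (m * D + 1) : ℝ) := by rw [Nat.add_comm 1 (m*D)]; ring
        _ ≤ _ := h2
  set r : ℝ := α ^ (-(1 / (D:ℝ))) with hr
  have hD0 : (0:ℝ) < (D:ℝ) := by exact_mod_cast hD
  have hr0 : 0 < r := Real.rpow_pos_of_pos hα0 _
  have hr1 : r < 1 :=
    Real.rpow_lt_one_of_one_lt_of_neg hα (neg_lt_zero.mpr (by positivity))
  have hbound : ∀ n : ℕ, 1 / (q n : ℝ) ≤ α * r ^ n := by
    intro n
    have hrn : r ^ n = α ^ (-((n:ℝ) / (D:ℝ))) := by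
      rw [hr, ← Real.rpow_natCast (α ^ (-(1/(D:ℝ)))) n, ← Real.rpow_mul hα0.le]
      ring_nf
    rcases Nat.eq_zero_or_pos n with h0 | hn1
    · subst h0
      simp only [pow_zero, mul_one]
      rw [div_le_iff₀ (hpos 0)]
      have h2 : (2:ℝ) ≤ (q 0 : ℝ) := by exact_mod_cast (Nat.prime_nth_prime 0).two_le
      nlinarith
    · set m := (n - 1) / D with hm
      have hnat : 1 + m * D ≤ n ∧ n ≤ m * D + D := by
        have h1 := Nat.div_add_mod (n - 1) D
        have h2 := Nat.mod_lt (n - 1) hD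
        rw [hm, Nat.mul_comm]
        generalize hgen : D * ((n - 1) / D) = t at h1 ⊢
        omega
      have h2 : (n:ℝ) / (D:ℝ) - 1 ≤ (m:ℝ) := by
        have : (n:ℝ) ≤ (m:ℝ) * D + D := by exact_mod_cast hnat.2
        rw [sub_le_iff_le_add, div_le_iff₀ hD0]
        nlinarith
      have hq1 : α ^ m ≤ (q n : ℝ) := by
        refine (step1 m).trans ?_
        exact_mod_cast hmono.monotone hnat.1
      have hpow : (0:ℝ) < α ^ m := by positivity
      calc 1 / (q n : ℝ) ≤ 1 / α ^ m := by
            apply one_div_le_one_div_of_le hpow hq1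
        _ = α ^ (-(m:ℝ)) := by
            rw [Real.rpow_neg hα0.le, Real.rpow_natCast, one_div]
        _ ≤ α ^ (1 - (n:ℝ)/(D:ℝ)) := by
            apply (Real.rpow_le_rpow_left_iff hα).mpr
            linarith
        _ = α * r ^ n := by
            rw [hrn, sub_eq_add_neg, Real.rpow_add hα0, Real.rpow_one]
  have hgeo : Summable (fun n : ℕ => α * r ^ n) :=
    (summable_geometric_of_lt_one hr0.le hr1).mul_left α
  exact hgeo.of_nonneg_of_le (fun n => by positivity) hbound

private lemma exists_window (α : ℝ) (hα : 1 < α) (D : ℕ) (hD : 0 < D) :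
    ∃ n : ℕ, (Nat.nth Nat.Prime (n + 1 + D) : ℝ) < α * (Nat.nth Nat.Prime (n + 1) : ℝ) := by
  by_contra h
  push_neg at h
  have hsum := summable_aux α hα D hD (fun n => h n)
  -- transfer to primes
  have hg : Function.Injective (fun p : Nat.Primes => Nat.count Nat.Prime (p : ℕ)) := by
    intro p p' hpp
    have h1 := Nat.nth_count p.2
    have h2 := Nat.nth_count p'.2
    have : (p : ℕ) = (p' : ℕ) := by simp only at hpp; rw [← h1, ← h2, hpp]
    exact Subtype.ext this
  have := hsum.comp_injective hg
  apply Nat.Primes.not_summable_one_div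
  refine this.congr (fun p => ?_)
  simp only [Function.comp_apply, Nat.nth_count p.2]

/-- For every real `α > 1` and every `k`, there exist `k` odd primes
`p₀ < p₁ < ⋯ < p_{k-1}` with `p_{k-1} < α · p₀`; equivalently, any two of them
are within the multiplicative factor `α` of each other. -/
theorem exists_k_odd_primes_within_factor (α : ℝ) (hα : 1 < α) (k : ℕ) :
    ∃ p : Fin k → ℕ, StrictMono p ∧ (∀ i, Nat.Prime (p i) ∧ Odd (p i)) ∧
      ∀ i j : Fin k, (p i : ℝ) < α * (p j : ℝ) := by
  match k with
  | 0 => exact ⟨fun i => i.elim0, fun i => i.elim0, fun i => i.elim0, fun i => i.elim0⟩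
  | 1 =>
    refine ⟨fun _ => 3, fun i j hij => absurd (Subsingleton.elim i j) hij.ne, ?_, ?_⟩
    · exact fun _ => ⟨by norm_num, ⟨1, by norm_num⟩⟩
    · intro i j
      push_cast
      nlinarith
  | (d + 2) =>
    obtain ⟨n, hn⟩ := exists_window α hα (d + 1) (Nat.succ_pos d)
    set q := Nat.nth Nat.Prime with hq
    have hmono : StrictMono q := Nat.nth_strictMono Nat.infinite_setOf_prime
    refine ⟨fun i => q (n + 1 + i), ?_, ?_, ?_⟩
    · intro i j hij
      exact hmono (by exact Nat.add_lt_add_left hij _)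
    · intro i
      have hp : Nat.Prime (q (n + 1 + i)) := Nat.prime_nth_prime _
      refine ⟨hp, hp.odd_of_ne_two ?_⟩
      have h2 : q 0 < q (n + 1 + i) := hmono (Nat.succ_le_iff.mp (by omega))
      have h3 : q 0 = 2 := Nat.nth_prime_zero_eq_two
      omega
    · intro i j
      have hi : (q (n + 1 + i) : ℝ) ≤ (q (n + 1 + (d + 1)) : ℝ) := by
        exact_mod_cast hmono.monotone (by omega : n + 1 + (i : ℕ) ≤ n + 1 + (d + 1))
      have hj : (q (n + 1) : ℝ) ≤ (q (n + 1 + j) : ℝ) := by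
        exact_mod_cast hmono.monotone (by omega : n + 1 ≤ n + 1 + (j : ℕ))
      calc (q (n + 1 + i) : ℝ) ≤ (q (n + 1 + (d + 1)) : ℝ) := hi
        _ < α * (q (n + 1) : ℝ) := hn
        _ ≤ α * (q (n + 1 + j) : ℝ) := by nlinarith
end

section
/- For every real α > 1, the number of primes in the interval (αⁿ, αⁿ⁺¹] is unbounded as n → ∞; that is, for every N there exists n such that the interval (αⁿ, αⁿ⁺¹] contains at least N primes. -/
/-- For every real `α > 1`, the number of primes in the interval `(αⁿ, αⁿ⁺¹]`
is unbounded as `n → ∞`. -/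
theorem primes_in_geometric_intervals_unbounded (α : ℝ) (hα : 1 < α) :
    ∀ N : ℕ, ∃ n : ℕ,
      N ≤ Nat.card {p : ℕ | p.Prime ∧ α ^ n < (p : ℝ) ∧ (p : ℝ) ≤ α ^ (n + 1)} := by
  by_contra hcon
  push_neg at hcon
  obtain ⟨N, hN⟩ := hcon
  have hα0 : (0 : ℝ) < α := lt_trans one_pos hα
  have hex : ∀ p : ℕ, ∃ n : ℕ, (p : ℝ) ≤ α ^ (n + 1) := by
    intro p
    obtain ⟨n, hn⟩ := pow_unbounded_of_one_lt (p : ℝ) hα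
    exact ⟨n, hn.le.trans (pow_le_pow_right₀ hα.le (Nat.le_succ n))⟩
  set g : ℕ → ℕ := fun p => Nat.find (hex p) with hg
  have hg_le : ∀ p : ℕ, (p : ℝ) ≤ α ^ (g p + 1) := fun p => Nat.find_spec (hex p)
  have hg_lt : ∀ p : ℕ, 1 < p → α ^ (g p) < p := by
    intro p hp
    rcases Nat.eq_zero_or_pos (g p) with h0 | h0
    · rw [h0, pow_zero]; exact_mod_cast hp
    · obtain ⟨m, hm⟩ := Nat.exists_eq_succ_of_ne_zero h0.ne'
      have hmin := Nat.find_min (hex p) (m := m) (show m < g p from hm ▸ m.lt_succ_self)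
      push_neg at hmin
      rw [hm]; exact hmin
  set f : ℕ → ℝ := Set.indicator {p | p.Prime} (fun n => 1 / (n : ℝ)) with hf
  have hf0 : ∀ n, 0 ≤ f n := by
    intro n
    apply Set.indicator_nonneg
    intro i _; positivity
  have hinv0 : (0 : ℝ) ≤ α⁻¹ := (inv_pos.mpr hα0).le
  have hinv1 : α⁻¹ < 1 := inv_lt_one_of_one_lt₀ hα
  have key : ∀ M : ℕ, ∑ i ∈ Finset.range M, f i ≤ (N : ℝ) * (1 - α⁻¹)⁻¹ := by
    intro M
    obtain ⟨L, hL⟩ := pow_unbounded_of_one_lt (M : ℝ) hα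
    have hsum : ∑ i ∈ Finset.range M, f i
        = ∑ p ∈ (Finset.range M).filter Nat.Prime, 1 / (p : ℝ) := by
      rw [Finset.sum_filter]
      refine Finset.sum_congr rfl fun i _ => ?_
      by_cases hi : i.Prime <;> simp [hf, Set.indicator_apply, hi]
    rw [hsum]
    set P := (Finset.range M).filter Nat.Prime with hP
    have step1 : ∑ p ∈ P, 1 / (p : ℝ) ≤ ∑ p ∈ P, (α⁻¹) ^ (g p) := by
      refine Finset.sum_le_sum fun p hp => ?_
      have hp' : p.Prime := (Finset.mem_filter.mp hp).2
      have h1 : α ^ (g p) < p := hg_lt p hp'.one_lt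
      rw [one_div, inv_pow]
      exact inv_anti₀ (pow_pos hα0 _) h1.le
    have hmaps : ∀ p ∈ P, g p ∈ Finset.range L := by
      intro p hp
      obtain ⟨hpM, hp'⟩ := Finset.mem_filter.mp hp
      rw [Finset.mem_range] at hpM ⊢
      have h1 : α ^ (g p) < α ^ L := by
        calc α ^ (g p) < (p : ℝ) := hg_lt p hp'.one_lt
          _ < M := by exact_mod_cast hpM
          _ < α ^ L := hL
      exact (pow_lt_pow_iff_right₀ hα).mp h1
    have step2 : ∑ p ∈ P, (α⁻¹ : ℝ) ^ (g p)
        = ∑ n ∈ Finset.range L, ∑ p ∈ P.filter (fun p => g p = n), (α⁻¹) ^ (g p) :=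
      (Finset.sum_fiberwise_of_maps_to hmaps _).symm
    have step3 : ∀ n, ∑ p ∈ P.filter (fun p => g p = n), (α⁻¹ : ℝ) ^ (g p)
        ≤ (N : ℝ) * (α⁻¹) ^ n := by
      intro n
      have heq : ∑ p ∈ P.filter (fun p => g p = n), (α⁻¹ : ℝ) ^ (g p)
          = ((P.filter (fun p => g p = n)).card : ℝ) * (α⁻¹) ^ n := by
        rw [Finset.sum_congr rfl fun p hp => by
          rw [(Finset.mem_filter.mp hp).2]]
        rw [Finset.sum_const, nsmul_eq_mul]
      rw [heq]
      have hfin : {p : ℕ | p.Prime ∧ α ^ n < (p : ℝ) ∧ (p : ℝ) ≤ α ^ (n + 1)}.Finite := by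
        apply Set.Finite.subset (Set.finite_Iic (Nat.ceil (α ^ (n + 1))))
        intro p hp
        exact Set.mem_Iic.mpr (Nat.cast_le.mp (hp.2.2.trans (Nat.le_ceil _)))
      have hsub : ↑(P.filter fun p => g p = n)
          ⊆ {p : ℕ | p.Prime ∧ α ^ n < (p : ℝ) ∧ (p : ℝ) ≤ α ^ (n + 1)} := by
        intro p hp
        rw [Finset.mem_coe, Finset.mem_filter] at hp
        obtain ⟨hpP, hgp⟩ := hp
        have hp' : p.Prime := (Finset.mem_filter.mp hpP).2
        exact ⟨hp', by rw [← hgp]; exact hg_lt p hp'.one_lt, by rw [← hgp]; exact hg_le p⟩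
      have hcard : ((P.filter fun p => g p = n).card : ℝ) ≤ N := by
        have h1 : (P.filter fun p => g p = n).card ≤ N := by
          calc (P.filter fun p => g p = n).card
              = (↑(P.filter fun p => g p = n) : Set ℕ).ncard :=
                (Set.ncard_coe_finset _).symm
            _ ≤ {p : ℕ | p.Prime ∧ α ^ n < (p : ℝ) ∧ (p : ℝ) ≤ α ^ (n + 1)}.ncard :=
                Set.ncard_le_ncard hsub hfin
            _ = Nat.card {p : ℕ | p.Prime ∧ α ^ n < (p : ℝ) ∧ (p : ℝ) ≤ α ^ (n + 1)} :=
                (Nat.card_coe_set_eq _).symm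
            _ ≤ N := (hN n).le
        exact_mod_cast h1
      exact mul_le_mul_of_nonneg_right hcard (pow_nonneg hinv0 n)
    calc ∑ p ∈ P, 1 / (p : ℝ)
        ≤ ∑ p ∈ P, (α⁻¹) ^ (g p) := step1
      _ = ∑ n ∈ Finset.range L, ∑ p ∈ P.filter (fun p => g p = n), (α⁻¹) ^ (g p) := step2
      _ ≤ ∑ n ∈ Finset.range L, (N : ℝ) * (α⁻¹) ^ n :=
          Finset.sum_le_sum fun n _ => step3 n
      _ = (N : ℝ) * ∑ n ∈ Finset.range L, (α⁻¹) ^ n := (Finset.mul_sum _ _ _).symm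
      _ ≤ (N : ℝ) * (1 - α⁻¹)⁻¹ :=
          mul_le_mul_of_nonneg_left
            (sum_le_hasSum _ (fun i _ => pow_nonneg hinv0 i)
              (hasSum_geometric_of_lt_one hinv0 hinv1))
            (Nat.cast_nonneg N)
  exact not_summable_one_div_on_primes (summable_of_sum_range_le hf0 key)
end

section
/- Let D be a finite set of odd primes such that gcd(d, d'² - 1) = 1 for all d, d' ∈ D, and let P = ∏_{d ∈ D} d. Then for any integer b there exists an integer C' such that (P/d)¹⁶ · C' ≡ b (mod d² - 1) for every d ∈ D. -/
/-- Let `D` be a finite set of odd primes such that `gcd(d, d'² - 1) = 1` for all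
`d, d' ∈ D`, and let `P = ∏_{d ∈ D} d`.  Then for any integer `b` there is an
integer `C'` with `(P/d)¹⁶ · C' ≡ b (mod d² - 1)` for every `d ∈ D`. -/
theorem exists_C'_congruent_mod_d_sq_sub_one (D : Finset ℕ)
    (hprime : ∀ d ∈ D, Nat.Prime d ∧ Odd d)
    (hcop : ∀ d ∈ D, ∀ d' ∈ D, IsCoprime (d : ℤ) ((d' : ℤ) ^ 2 - 1))
    (b : ℤ) :
    ∃ C' : ℤ, ∀ d ∈ D,
      (((∏ x ∈ D, x) / d : ℕ) : ℤ) ^ 16 * C' ≡ b [ZMOD ((d : ℤ) ^ 2 - 1)] := by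
  set P : ℕ := ∏ x ∈ D, x with hP
  set N : ℤ := ∏ d ∈ D, ((d : ℤ) ^ 2 - 1) with hN
  have hPN : IsCoprime ((P : ℤ)) N := by
    have : IsCoprime (∏ d ∈ D, (d : ℤ)) N := by
      apply IsCoprime.prod_left
      intro d hd
      exact IsCoprime.prod_right fun d' hd' => hcop d hd d' hd'
    simpa [hP, Nat.cast_prod] using this
  have hPN16 : IsCoprime (((P : ℤ)) ^ 16) N := hPN.pow_left
  obtain ⟨x, y, hxy⟩ := hPN16
  refine ⟨x * b, fun d hd => ?_⟩
  have hdvdN : ((d : ℤ) ^ 2 - 1) ∣ N := Finset.dvd_prod_of_mem _ hd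
  -- Step 1: P^16 * (x*b) ≡ b mod d²-1
  have h1 : (P : ℤ) ^ 16 * (x * b) ≡ b [ZMOD ((d : ℤ) ^ 2 - 1)] := by
    have : ((d : ℤ) ^ 2 - 1) ∣ b - (P : ℤ) ^ 16 * (x * b) := by
      have : b - (P : ℤ) ^ 16 * (x * b) = (y * b) * N := by
        linear_combination (-b) * hxy
      rw [this]
      exact Dvd.dvd.mul_left hdvdN _
    exact Int.modEq_iff_dvd.mpr this
  -- Step 2: (P/d)^16 ≡ P^16 mod d²-1
  have hddvd : d ∣ P := Finset.dvd_prod_of_mem _ hd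
  have hcast : ((P / d : ℕ) : ℤ) * (d : ℤ) = (P : ℤ) := by
    exact_mod_cast congrArg (Nat.cast : ℕ → ℤ) (Nat.div_mul_cancel hddvd)
  have hd2 : (d : ℤ) ^ 2 ≡ 1 [ZMOD ((d : ℤ) ^ 2 - 1)] := by
    exact Int.modEq_iff_dvd.mpr ⟨-1, by ring⟩
  have hd16 : (d : ℤ) ^ 16 ≡ 1 [ZMOD ((d : ℤ) ^ 2 - 1)] := by
    calc (d : ℤ) ^ 16 = ((d : ℤ) ^ 2) ^ 8 := by ring
    _ ≡ 1 ^ 8 [ZMOD ((d : ℤ) ^ 2 - 1)] := hd2.pow 8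
    _ = 1 := one_pow 8
  have h2 : ((P / d : ℕ) : ℤ) ^ 16 ≡ (P : ℤ) ^ 16 [ZMOD ((d : ℤ) ^ 2 - 1)] := by
    calc ((P / d : ℕ) : ℤ) ^ 16 = ((P / d : ℕ) : ℤ) ^ 16 * 1 := by ring
    _ ≡ ((P / d : ℕ) : ℤ) ^ 16 * (d : ℤ) ^ 16 [ZMOD ((d : ℤ) ^ 2 - 1)] :=
        (hd16.symm.mul_left _)
    _ = (((P / d : ℕ) : ℤ) * (d : ℤ)) ^ 16 := by ring
    _ = (P : ℤ) ^ 16 := by rw [hcast]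
  exact (h2.mul_right (x * b)).trans h1
end

section
/- There exists a constant α₁₆ such that for every positive integer A, every integer B with B ≡ A (mod 2) and A²/16 + α₁₆ ≤ B ≤ A²/15 can be written as B = x₁² + ... + x₁₆² with positive integers x₁, ..., x₁₆ satisfying x₁ + ... + x₁₆ = A. -/
set_option maxHeartbeats 2000000

/-- Salvetti's lemma for `r = 16`: there is a constant `α₁₆` such that for every
positive integer `A`, every integer `B ≡ A (mod 2)` with
`A²/16 + α₁₆ ≤ B ≤ A²/15` can be written as `x₁² + ⋯ + x₁₆²` with positive
integers `xⱼ` satisfying `x₁ + ⋯ + x₁₆ = A`. -/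
theorem salvetti_sixteen_squares :
    ∃ α₁₆ : ℝ, ∀ A : ℕ, 0 < A → ∀ B : ℕ, B % 2 = A % 2 →
      (A : ℝ) ^ 2 / 16 + α₁₆ ≤ (B : ℝ) → (B : ℝ) ≤ (A : ℝ) ^ 2 / 15 →
      ∃ x : Fin 16 → ℕ, (∀ j, 0 < x j) ∧ (∑ j, x j) = A ∧ (∑ j, (x j) ^ 2) = B := by
  refine ⟨226, ?_⟩
  intro A hA B hpar hlow hup
  -- A is large
  have hA233 : 233 ≤ A := by
    by_contra h
    push_neg at h
    have h1 : (A : ℝ) ≤ 232 := by exact_mod_cast Nat.le_of_lt_succ h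
    have h2 : (0:ℝ) ≤ (A:ℝ) := by positivity
    nlinarith
  have h15 : 15 * B ≤ A ^ 2 := by
    have : (15:ℝ) * (B:ℝ) ≤ (A:ℝ) ^ 2 := by linarith
    exact_mod_cast this
  have hlowN : A ^ 2 + 3616 ≤ 16 * B := by
    have : (A:ℝ) ^ 2 + 3616 ≤ 16 * (B:ℝ) := by linarith
    exact_mod_cast this
  -- decompose A = 16(w+1) + p + q
  obtain ⟨u, s, hAeq, hs15⟩ : ∃ u s, A = 16 * u + s ∧ s < 16 :=
    ⟨A / 16, A % 16, by omega, by omega⟩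
  have hu14 : 14 ≤ u := by omega
  obtain ⟨p, q, hpq, hp8, hq7⟩ : ∃ p q, p + q = s ∧ p ≤ 8 ∧ q ≤ 7 :=
    ⟨(s + 1) / 2, s / 2, by omega, by omega, by omega⟩
  obtain ⟨w, hw⟩ : ∃ w, u = w + 1 := ⟨u - 1, by omega⟩
  have hw13 : 13 ≤ w := by omega
  -- bounds for the base value 14u² + (u+p)² + (u+q)²
  have hbase_le : 16 * (14 * u ^ 2 + (u + p) ^ 2 + (u + q) ^ 2) ≤ A ^ 2 + 1808 := by
    rw [hAeq, ← hpq]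
    have hP : p ^ 2 ≤ 64 := by
      calc p ^ 2 ≤ 8 ^ 2 := Nat.pow_le_pow_left hp8 2
        _ = 64 := by norm_num
    have hQ : q ^ 2 ≤ 49 := by
      calc q ^ 2 ≤ 7 ^ 2 := Nat.pow_le_pow_left hq7 2
        _ = 49 := by norm_num
    have hPQ : 0 ≤ p * q := Nat.zero_le _
    ring_nf
    ring_nf at hP hQ
    linarith [hP, hQ, hPQ]
  have hbase_ge : A ^ 2 ≤ 16 * (14 * u ^ 2 + (u + p) ^ 2 + (u + q) ^ 2) := by
    rw [hAeq, ← hpq]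
    zify
    nlinarith [sq_nonneg ((p:ℤ) - (q:ℤ))]
  -- parity facts
  have hsq : ∀ n : ℕ, n ^ 2 % 2 = n % 2 := by
    intro n
    rcases Nat.even_or_odd n with hn | hn
    · obtain ⟨k, hk⟩ := hn; subst hk; ring_nf; omega
    · obtain ⟨k, hk⟩ := hn; subst hk; ring_nf; omega
  have h1 := hsq (u + p)
  have h2 := hsq (u + q)
  -- abstract the squares so that omega can reason linearly
  obtain ⟨M, hM⟩ : ∃ M, A ^ 2 = M := ⟨_, rfl⟩
  obtain ⟨S1, hS1⟩ : ∃ x, (u + p) ^ 2 = x := ⟨_, rfl⟩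
  obtain ⟨S2, hS2⟩ : ∃ x, (u + q) ^ 2 = x := ⟨_, rfl⟩
  obtain ⟨U, hU⟩ : ∃ x, u ^ 2 = x := ⟨_, rfl⟩
  rw [hM] at h15 hlowN hbase_le hbase_ge
  rw [hS1, hS2, hU] at hbase_le hbase_ge
  rw [hS1] at h1
  rw [hS2] at h2
  obtain ⟨N, hNB, h32⟩ : ∃ N, (14 * U + S1 + S2) + 2 * N = B ∧ 32 * N ≤ B := by
    refine ⟨(B - (14 * U + S1 + S2)) / 2, by omega, by omega⟩
  -- N is at most w²
  have hA31 : A ≤ 16 * w + 31 := by omega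
  have h480 : 480 * N ≤ (16 * w + 31) ^ 2 := by
    have hsqA : M ≤ (16 * w + 31) ^ 2 := by
      rw [← hM]; exact Nat.pow_le_pow_left hA31 2
    omega
  have hNw : N ≤ w ^ 2 := by
    zify at h480 ⊢
    nlinarith [sq_nonneg ((w:ℤ) - 13), h480]
  obtain ⟨a, b, c, d, habcd⟩ := Nat.sum_four_squares N
  have hbound : ∀ e : ℕ, e ^ 2 ≤ N → e ≤ w := by
    intro e he
    by_contra h
    push_neg at h
    have h1 : (w + 1) ^ 2 ≤ e ^ 2 := Nat.pow_le_pow_left h 2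
    have h2 : w ^ 2 < (w + 1) ^ 2 :=
      Nat.pow_lt_pow_left (Nat.lt_succ_self w) two_ne_zero
    exact absurd (lt_of_le_of_lt (he.trans hNw) h2) (not_lt.mpr h1)
  have ha : a ≤ w := hbound a (le_of_le_of_eq
    (le_trans (le_trans (Nat.le_add_right _ _) (Nat.le_add_right _ _)) (Nat.le_add_right _ _)) habcd)
  have hb : b ≤ w := hbound b (le_of_le_of_eq
    (le_trans (le_trans (Nat.le_add_left _ _) (Nat.le_add_right _ _)) (Nat.le_add_right _ _)) habcd)
  have hc : c ≤ w := hbound c (le_of_le_of_eq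
    (le_trans (Nat.le_add_left _ _) (Nat.le_add_right _ _)) habcd)
  have hd : d ≤ w := hbound d (le_of_le_of_eq (Nat.le_add_left _ _) habcd)
  refine ⟨![u + p, u + q, u + a, u - a, u + b, u - b, u + c, u - c, u + d, u - d,
      u, u, u, u, u, u], ?_, ?_, ?_⟩
  · simp only [Fin.forall_fin_succ, Fin.isEmpty, IsEmpty.forall_iff, Matrix.cons_val_zero,
      Matrix.cons_val_succ, and_true]
    omega
  · simp only [Fin.sum_univ_succ, Fin.sum_univ_zero, Matrix.cons_val_zero,
      Matrix.cons_val_succ, add_zero]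
    omega
  · simp only [Fin.sum_univ_succ, Fin.sum_univ_zero, Matrix.cons_val_zero,
      Matrix.cons_val_succ, add_zero]
    have hau : a ≤ u := by omega
    have hbu : b ≤ u := by omega
    have hcu : c ≤ u := by omega
    have hdu : d ≤ u := by omega
    zify [hau, hbu, hcu, hdu]
    rw [← hU, ← hS1, ← hS2] at hNB
    have hNBz : 14 * (u:ℤ) ^ 2 + ((u:ℤ) + p) ^ 2 + ((u:ℤ) + q) ^ 2 + 2 * N = B := by
      exact_mod_cast hNB
    have habcdz : (a:ℤ) ^ 2 + b ^ 2 + c ^ 2 + d ^ 2 = N := by exact_mod_cast habcd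
    linear_combination hNBz + 2 * habcdz
end

section
/- Let r ≥ 16 and A > 0 be integers. There exists a constant α_r depending only on r such that every integer B with B ≡ A (mod 2) and A²/r + α_r ≤ B ≤ A²/(r-1) can be represented as B = x₁² + ... + x_r² with integers xⱼ > 0 satisfying x₁ + ... + x_r = A. -/
private def salvettiAux (m ρ a b c d : ℕ) (j : ℕ) : ℕ :=
  if j = 0 then m + ρ else if j = 1 then m + a else if j = 2 then m - a
  else if j = 3 then m + b else if j = 4 then m - b
  else if j = 5 then m + c else if j = 6 then m - c
  else if j = 7 then m + d else if j = 8 then m - d else m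

private lemma salvettiAux_of_ge (m ρ a b c d j : ℕ) (h : 9 ≤ j) :
    salvettiAux m ρ a b c d j = m := by
  unfold salvettiAux
  split_ifs <;> omega

private lemma salvettiAux_pos (m ρ a b c d : ℕ) (hm : 1 ≤ m)
    (ha : a ≤ m - 1) (hb : b ≤ m - 1) (hc : c ≤ m - 1) (hd : d ≤ m - 1) (j : ℕ) :
    0 < salvettiAux m ρ a b c d j := by
  unfold salvettiAux
  split_ifs <;> omega

private lemma salvettiAux_sum9 (m ρ a b c d : ℕ) :
    ∑ j ∈ Finset.range 9, salvettiAux m ρ a b c d j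
      = (m + ρ) + ((m + a) + (m - a)) + ((m + b) + (m - b))
        + ((m + c) + (m - c)) + ((m + d) + (m - d)) := by
  simp [Finset.sum_range_succ, salvettiAux]
  omega

private lemma salvettiAux_sumsq9 (m ρ a b c d : ℕ) :
    ∑ j ∈ Finset.range 9, (salvettiAux m ρ a b c d j) ^ 2
      = (m + ρ) ^ 2 + ((m + a) ^ 2 + (m - a) ^ 2) + ((m + b) ^ 2 + (m - b) ^ 2)
        + ((m + c) ^ 2 + (m - c) ^ 2) + ((m + d) ^ 2 + (m - d) ^ 2) := by
  simp [Finset.sum_range_succ, salvettiAux]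
  ring

set_option maxHeartbeats 1000000 in
/-- Salvetti's lemma: for `r ≥ 16` there is a constant `α_r` depending only on
`r` such that for every positive integer `A`, every integer `B ≡ A (mod 2)` with
`A²/r + α_r ≤ B ≤ A²/(r-1)` can be written as `x₁² + ⋯ + x_r²` with positive
integers `xⱼ` satisfying `x₁ + ⋯ + x_r = A`. -/
theorem salvetti_lemma (r : ℕ) (hr : 16 ≤ r) :
    ∃ αr : ℝ, ∀ A : ℕ, 0 < A → ∀ B : ℕ, B % 2 = A % 2 →
      (A : ℝ) ^ 2 / r + αr ≤ (B : ℝ) → (B : ℝ) ≤ (A : ℝ) ^ 2 / (r - 1) →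
      ∃ x : Fin r → ℕ, (∀ j, 0 < x j) ∧ (∑ j, x j) = A ∧ (∑ j, (x j) ^ 2) = B := by
  refine ⟨(r : ℝ) ^ 6, ?_⟩
  intro A hA B hpar hB1 hB2
  have hr0 : (0 : ℝ) < r := by positivity
  have hr1 : (1 : ℝ) < r := by exact_mod_cast lt_of_lt_of_le (by norm_num) hr
  -- integer versions of the two inequalities
  have h1 : (A : ℤ) ^ 2 + r ^ 7 ≤ B * r := by
    have := mul_le_mul_of_nonneg_right hB1 hr0.le
    rw [add_mul, div_mul_cancel₀ _ hr0.ne'] at this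
    have h' : (A : ℝ) ^ 2 + (r : ℝ) ^ 7 ≤ (B : ℝ) * r := by
      calc (A : ℝ) ^ 2 + (r : ℝ) ^ 7 = (A:ℝ)^2 + (r:ℝ)^6 * r := by ring
        _ ≤ _ := this
    exact_mod_cast h'
  have h2 : (B : ℤ) * (r - 1) ≤ (A : ℤ) ^ 2 := by
    have hpos : (0 : ℝ) < (r : ℝ) - 1 := by linarith
    have := mul_le_mul_of_nonneg_right hB2 hpos.le
    rw [div_mul_cancel₀ _ hpos.ne'] at this
    exact_mod_cast this
  obtain ⟨m, ρ, hmA, hρr⟩ : ∃ m ρ : ℕ, r * m + ρ = A ∧ ρ < r :=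
    ⟨A / r, A % r, Nat.div_add_mod A r, Nat.mod_lt _ (by omega)⟩
  have hmz : (r : ℤ) * m + ρ = A := by exact_mod_cast hmA
  have hρz : (ρ : ℤ) ≤ (r : ℤ) - 1 := by
    have : (ρ : ℤ) < (r : ℤ) := by exact_mod_cast hρr
    linarith
  have hρ0 : (0 : ℤ) ≤ ρ := Int.ofNat_nonneg _
  have hm0 : (0 : ℤ) ≤ m := Int.ofNat_nonneg _
  have hrz : (16 : ℤ) ≤ r := by exact_mod_cast hr
  -- A is large
  have hA2 : 15 * (r : ℤ) ^ 7 ≤ (A : ℤ) ^ 2 := by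
    nlinarith [mul_le_mul_of_nonneg_right h1 (by linarith : (0:ℤ) ≤ (r:ℤ) - 1),
      mul_le_mul_of_nonneg_right h2 (by linarith : (0:ℤ) ≤ (r:ℤ))]
  have hAge : 247 * (r : ℤ) ^ 2 ≤ (A : ℤ) := by
    by_contra hcon
    push_neg at hcon
    have hApos : (0 : ℤ) < A := by exact_mod_cast hA
    have hr3 : (4096 : ℤ) ≤ (r:ℤ) ^ 3 := by nlinarith
    have p1 : (A:ℤ)^2 < (247*(r:ℤ)^2)^2 :=
      pow_lt_pow_left₀ hcon hApos.le (by norm_num)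
    have p2 : 61440 * (r:ℤ)^4 ≤ 15 * (r:ℤ)^7 := by
      nlinarith [mul_le_mul_of_nonneg_right hr3 (show (0:ℤ) ≤ 15*(r:ℤ)^4 by positivity)]
    nlinarith [p1, p2, hA2]
  have hmge : 240 * (r : ℤ) ≤ (m : ℤ) := by nlinarith
  -- evenness
  obtain ⟨w, hw⟩ : Even ((B : ℤ) - A) := by rw [Int.even_iff]; omega
  obtain ⟨u, hu⟩ : Even ((m : ℤ) * ((m:ℤ) + 1)) := Int.even_mul_succ_self _
  obtain ⟨v, hv⟩ : Even ((ρ : ℤ) * ((ρ:ℤ) + 1)) := Int.even_mul_succ_self _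
  obtain ⟨t, ht⟩ : Even ((B : ℤ) + r * m ^ 2 - 2 * m * A - ρ ^ 2) := by
    refine ⟨w + r * u - v + ρ - m * A, ?_⟩
    linear_combination hw + (r : ℤ) * hu - hv - hmz
  have hArm : (A:ℤ) - r * m = ρ := by linarith
  -- lower bound on t
  have hexpr0 : 0 ≤ (B:ℤ) + r*m^2 - 2*m*A - ρ^2 := by
    have hρsq : (ρ:ℤ)^2 ≤ ((r:ℤ)-1)^2 := by nlinarith
    have hcube : (ρ:ℤ)^2 * ((r:ℤ)-1) ≤ ((r:ℤ)-1)^2 * ((r:ℤ)-1) :=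
      mul_le_mul_of_nonneg_right hρsq (by linarith)
    have h37 : ((r:ℤ)-1)^2 * ((r:ℤ)-1) ≤ (r:ℤ)^7 := by
      have hc : ((r:ℤ)-1)^3 ≤ (r:ℤ)^3 := pow_le_pow_left₀ (by linarith) (by linarith) 3
      have h3 : (r:ℤ)^3 ≤ (r:ℤ)^7 := pow_le_pow_right₀ (by linarith) (by norm_num)
      nlinarith
    have hmul : 0 ≤ ((B:ℤ) + r*m^2 - 2*m*A - ρ^2) * r := by
      have e1 : ((B:ℤ) + r*m^2 - 2*m*A - ρ^2) * r
          = ((B:ℤ)*r - A^2) - (ρ:ℤ)^2*((r:ℤ) - 1)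
            + ((A:ℤ) - r*m + ρ) * (((A:ℤ) - r*m) - ρ) := by ring
      rw [e1, hArm, sub_self, mul_zero, add_zero]
      linarith [h1, hcube, h37]
    by_contra hneg
    push_neg at hneg
    have : ((B:ℤ) + r*m^2 - 2*m*A - ρ^2) * r < 0 :=
      mul_neg_of_neg_of_pos hneg (by linarith)
    linarith
  have ht0 : 0 ≤ t := by linarith [ht]
  -- upper bound on t
  have htle : t ≤ ((m : ℤ) - 1) ^ 2 := by
    have hexprle : (B:ℤ) + r*m^2 - 2*m*A - ρ^2 ≤ 2 * ((m:ℤ) - 1)^2 := by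
      have e3 : ((B:ℤ) + r*m^2 - 2*m*A - ρ^2) * ((r:ℤ) - 1)
          = ((B:ℤ)*((r:ℤ)-1) - A^2) + ((r:ℤ)*m^2 + 2*m*ρ + ρ^2*(2 - (r:ℤ)))
            + ((A:ℤ) - (r:ℤ)*m + ρ + 2*(m:ℤ)) * (((A:ℤ) - r*m) - ρ) := by ring
      have e4 : ((B:ℤ) + r*m^2 - 2*m*A - ρ^2) * ((r:ℤ) - 1)
          ≤ 2 * ((m:ℤ) - 1)^2 * ((r:ℤ) - 1) := by
        rw [e3, hArm, sub_self, mul_zero, add_zero]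
        have q1 : 240 * (r:ℤ) * m ≤ m * m := by nlinarith [mul_le_mul_of_nonneg_right hmge hm0]
        have q2 : (ρ:ℤ) * m ≤ ((r:ℤ) - 1) * m := mul_le_mul_of_nonneg_right hρz hm0
        nlinarith [h2, q1, q2, hρ0, hm0, hrz, hρz, sq_nonneg ((ρ:ℤ))]
      exact le_of_mul_le_mul_right e4 (by linarith)
    linarith [ht]
  -- four squares
  obtain ⟨a, b, c, d, habcd⟩ := Nat.sum_four_squares t.toNat
  have htT : (t.toNat : ℤ) = t := Int.toNat_of_nonneg ht0
  have hm1 : 1 ≤ m := by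
    have : (1 : ℤ) ≤ m := by linarith
    exact_mod_cast this
  have hmm : ((m - 1 : ℕ) : ℤ) = (m : ℤ) - 1 := by
    push_cast [Nat.cast_sub hm1]; ring
  have hTle : t.toNat ≤ (m - 1) ^ 2 := by
    have : (t.toNat : ℤ) ≤ ((m - 1 : ℕ) : ℤ) ^ 2 := by rw [hmm, htT]; exact htle
    exact_mod_cast this
  have hsq : ∀ e : ℕ, e ^ 2 ≤ t.toNat → e ≤ m - 1 := by
    intro e he
    have : e ^ 2 ≤ (m - 1) ^ 2 := le_trans he hTle
    exact (Nat.pow_le_pow_iff_left (by norm_num)).mp this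
  have ha : a ≤ m - 1 := hsq a (by omega)
  have hb : b ≤ m - 1 := hsq b (by omega)
  have hc : c ≤ m - 1 := hsq c (by omega)
  have hd : d ≤ m - 1 := hsq d (by omega)
  have ham : a ≤ m := by omega
  have hbm : b ≤ m := by omega
  have hcm : c ≤ m := by omega
  have hdm : d ≤ m := by omega
  -- the construction
  refine ⟨fun j => salvettiAux m ρ a b c d j.val, ?_, ?_, ?_⟩
  · intro j
    exact salvettiAux_pos m ρ a b c d hm1 ha hb hc hd j.val
  · rw [Fin.sum_univ_eq_sum_range (fun j => salvettiAux m ρ a b c d j), Finset.range_eq_Ico,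
      ← Finset.sum_Ico_consecutive (fun j => salvettiAux m ρ a b c d j)
        (Nat.zero_le 9) (by omega : 9 ≤ r)]
    have htail : ∑ j ∈ Finset.Ico 9 r, salvettiAux m ρ a b c d j = (r - 9) * m := by
      have hconst : ∀ j ∈ Finset.Ico 9 r, salvettiAux m ρ a b c d j = m := fun j hj =>
        salvettiAux_of_ge m ρ a b c d j (Finset.mem_Ico.mp hj).1
      rw [Finset.sum_congr rfl hconst, Finset.sum_const, Nat.card_Ico, smul_eq_mul]
    rw [htail, ← Finset.range_eq_Ico, salvettiAux_sum9]
    zify [ham, hbm, hcm, hdm, (by omega : 9 ≤ r)]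
    linear_combination hmz
  · rw [Fin.sum_univ_eq_sum_range (fun j => (salvettiAux m ρ a b c d j) ^ 2),
      Finset.range_eq_Ico,
      ← Finset.sum_Ico_consecutive (fun j => (salvettiAux m ρ a b c d j) ^ 2)
        (Nat.zero_le 9) (by omega : 9 ≤ r)]
    have htail : ∑ j ∈ Finset.Ico 9 r, (salvettiAux m ρ a b c d j) ^ 2 = (r - 9) * m ^ 2 := by
      have hconst : ∀ j ∈ Finset.Ico 9 r, (salvettiAux m ρ a b c d j) ^ 2 = m ^ 2 := by
        intro j hj
        rw [salvettiAux_of_ge m ρ a b c d j (Finset.mem_Ico.mp hj).1]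
      rw [Finset.sum_congr rfl hconst, Finset.sum_const, Nat.card_Ico, smul_eq_mul]
    rw [htail, ← Finset.range_eq_Ico, salvettiAux_sumsq9]
    have hkey : (2 : ℤ) * ((a:ℤ)^2 + (b:ℤ)^2 + (c:ℤ)^2 + (d:ℤ)^2)
        = (B : ℤ) + r * m ^ 2 - 2 * m * A - ρ ^ 2 := by
      have hsum : ((a:ℤ)^2 + (b:ℤ)^2 + (c:ℤ)^2 + (d:ℤ)^2) = t := by
        rw [← htT]; exact_mod_cast habcd
      rw [hsum]; linarith [ht]
    zify [ham, hbm, hcm, hdm, (by omega : 9 ≤ r)]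
    linear_combination hkey + 2 * (m:ℤ) * hmz
end

section
/- Let ε, δ > 0 and suppose D is a finite set of primes with minimum d* such that (d+1)/(d'-1) < α for all d, d' ∈ D, where ε = δ/(d* - 1). If A_{d*}, A_d are positive reals with (d-1)A_d and (d*-1)A_{d*} satisfying |(d-1)A_d - (d*-1)A_{d*}| ≤ (α⁸ - 1)((d*-1)A_{d*} + m₀ - 3), and A_{d*} < 2εm₀ and 1/(d-1) ≤ ε/δ, then |A_d - A_{d*}| ≤ h(α)·ε·m₀ where h(α) = (α⁸-1)(2 + 1/δ) + 2(α-1), and h(α) → 0 as α → 1. -/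
set_option maxHeartbeats 1000000


/-- Key estimate in the proof of Theorem 2.1: with `D` a finite set of primes
with minimum `d*`, `(d+1)/(d'-1) < α` for all `d, d' ∈ D`, and
`ε = δ/(d* - 1)`, if the positive reals `A_d, A_{d*}` satisfy
`|(d-1)A_d - (d*-1)A_{d*}| ≤ (α⁸-1)((d*-1)A_{d*} + m₀ - 3)`, `A_{d*} < 2εm₀`
and `1/(d-1) ≤ ε/δ`, then `|A_d - A_{d*}| ≤ h(α)·ε·m₀` where
`h(α) = (α⁸-1)(2 + 1/δ) + 2(α-1)`; moreover `h(α) → 0` as `α → 1`. -/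
theorem A_d_close_to_A_dstar (ε δ α m₀ : ℝ) (hε : 0 < ε) (hδ : 0 < δ)
    (hα : 1 < α) (D : Finset ℕ) (hne : D.Nonempty)
    (hprime : ∀ d ∈ D, Nat.Prime d)
    (hratio : ∀ d ∈ D, ∀ d' ∈ D, ((d : ℝ) + 1) / ((d' : ℝ) - 1) < α)
    (d : ℕ) (hd : d ∈ D)
    (hεdef : ε = δ / ((D.min' hne : ℝ) - 1))
    (Adstar Ad : ℝ) (hAdstar : 0 < Adstar) (hAd : 0 < Ad)
    (hmain : |((d : ℝ) - 1) * Ad - ((D.min' hne : ℝ) - 1) * Adstar| ≤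
      (α ^ 8 - 1) * (((D.min' hne : ℝ) - 1) * Adstar + m₀ - 3))
    (hA : Adstar < 2 * ε * m₀) (hinv : 1 / ((d : ℝ) - 1) ≤ ε / δ) :
    |Ad - Adstar| ≤ ((α ^ 8 - 1) * (2 + 1 / δ) + 2 * (α - 1)) * ε * m₀ ∧
      Filter.Tendsto (fun a : ℝ => (a ^ 8 - 1) * (2 + 1 / δ) + 2 * (a - 1))
        (nhds 1) (nhds 0) := by
  constructor
  · set s : ℝ := (D.min' hne : ℝ) with hs
    have hsmem := D.min'_mem hne
    have hs2 : (2 : ℝ) ≤ s := by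
      rw [hs]; exact_mod_cast (hprime _ hsmem).two_le
    have hd2 : (2 : ℝ) ≤ (d : ℝ) := by
      exact_mod_cast (hprime _ hd).two_le
    have hsd : s ≤ (d : ℝ) := by
      rw [hs]; exact_mod_cast D.min'_le d hd
    have hx : (0 : ℝ) < (d : ℝ) - 1 := by linarith
    have hy : (0 : ℝ) < s - 1 := by linarith
    have hα8 : (0 : ℝ) < α ^ 8 - 1 := by
      have : (1 : ℝ) < α ^ 8 := one_lt_pow₀ hα (by norm_num)
      linarith
    have hm0 : (0 : ℝ) < m₀ := by nlinarith
    have hεs : ε * (s - 1) = δ := by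
      rw [hεdef]; field_simp
    have hr' : (d : ℝ) + 1 < α * (s - 1) := by
      have hr := hratio d hd _ hsmem
      rw [← hs] at hr
      rwa [div_lt_iff₀ hy] at hr
    have hC : 0 ≤ (s - 1) * Adstar + m₀ - 3 := by
      nlinarith [abs_nonneg (((d : ℝ) - 1) * Ad - (s - 1) * Adstar), hmain]
    have hBlt : (s - 1) * Adstar < 2 * δ * m₀ := by nlinarith
    -- first term
    have heq : Ad - (s - 1) / ((d : ℝ) - 1) * Adstar
        = (((d : ℝ) - 1) * Ad - (s - 1) * Adstar) / ((d : ℝ) - 1) := by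
      field_simp
    have h1 : |Ad - (s - 1) / ((d : ℝ) - 1) * Adstar|
        ≤ (α ^ 8 - 1) * ((s - 1) * Adstar + m₀ - 3) * (ε / δ) := by
      rw [heq, abs_div, abs_of_pos hx, div_eq_mul_inv, ← one_div]
      exact mul_le_mul hmain hinv (by positivity) (by positivity)
    have h1' : (α ^ 8 - 1) * ((s - 1) * Adstar + m₀ - 3) * (ε / δ)
        ≤ (α ^ 8 - 1) * (2 + 1 / δ) * ε * m₀ := by
      have hC2 : (s - 1) * Adstar + m₀ - 3 ≤ 2 * δ * m₀ + m₀ := by linarith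
      have hstep : (α ^ 8 - 1) * ((s - 1) * Adstar + m₀ - 3)
          ≤ (α ^ 8 - 1) * (2 * δ * m₀ + m₀) :=
        mul_le_mul_of_nonneg_left hC2 hα8.le
      have hid : (α ^ 8 - 1) * (2 * δ * m₀ + m₀) * (ε / δ)
          = (α ^ 8 - 1) * (2 + 1 / δ) * ε * m₀ := by
        field_simp
      calc (α ^ 8 - 1) * ((s - 1) * Adstar + m₀ - 3) * (ε / δ)
          ≤ (α ^ 8 - 1) * (2 * δ * m₀ + m₀) * (ε / δ) :=
            mul_le_mul_of_nonneg_right hstep (by positivity)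
        _ = (α ^ 8 - 1) * (2 + 1 / δ) * ε * m₀ := hid
    -- second term
    have hα1 : (0 : ℝ) < α - 1 := by linarith
    have hdsub : (d : ℝ) - s ≤ (α - 1) * ((d : ℝ) - 1) := by
      have hmono : (α - 1) * (s - 1) ≤ (α - 1) * ((d : ℝ) - 1) :=
        mul_le_mul_of_nonneg_left (by linarith) hα1.le
      nlinarith [hr']
    have h2 : |(s - 1) / ((d : ℝ) - 1) * Adstar - Adstar| ≤ 2 * (α - 1) * ε * m₀ := by
      have hle1 : (s - 1) / ((d : ℝ) - 1) ≤ 1 := by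
        rw [div_le_one₀ hx]; linarith
      have hnonpos : (s - 1) / ((d : ℝ) - 1) * Adstar - Adstar ≤ 0 := by
        nlinarith
      rw [abs_of_nonpos hnonpos]
      have hratio2 : 1 - (s - 1) / ((d : ℝ) - 1) ≤ α - 1 := by
        have e : 1 - (s - 1) / ((d : ℝ) - 1) = ((d : ℝ) - s) / ((d : ℝ) - 1) := by
          field_simp; ring
        rw [e, div_le_iff₀ hx]
        linarith
      have hmul1 := mul_le_mul_of_nonneg_right hratio2 hAdstar.le
      have hmul2 := mul_lt_mul_of_pos_left hA hα1
      nlinarith [hmul1, hmul2]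
    calc |Ad - Adstar| ≤ |Ad - (s - 1) / ((d : ℝ) - 1) * Adstar|
          + |(s - 1) / ((d : ℝ) - 1) * Adstar - Adstar| := abs_sub_le _ _ _
      _ ≤ (α ^ 8 - 1) * (2 + 1 / δ) * ε * m₀ + 2 * (α - 1) * ε * m₀ := by
          linarith [h1.trans h1']
      _ = ((α ^ 8 - 1) * (2 + 1 / δ) + 2 * (α - 1)) * ε * m₀ := by ring
  · have hc : Continuous (fun a : ℝ => (a ^ 8 - 1) * (2 + 1 / δ) + 2 * (a - 1)) := by
      continuity
    have := hc.tendsto 1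
    simpa using this
end
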